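/- Let p be a prime, k a positive integer, and n ≥ p^k a positive integer. Write n = p^k·n_1 + r with integers n_1 ≥ 1 and 0 ≤ r ≤ p^k − 1. If p does not divide the numerator u_{n_1} of H_{n_1}, then p^k divides v_n. -/

import Mathlib

/-!
Removing the multiples `p^k j` (`1 ≤ j ≤ n₁`, exactly those in `[1, n]` since `r < p^k`) from
`H_n` gives `H_n = p^{-k} H_{n₁} + ∑_{i ≤ n, p^k ∤ i} 1/i`. As `p ∤ u_{n₁}`, the first term has
`p`-adic norm at least `p^k`, while every `1/i` in the remaining sum has norm below `p^k`. By the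
ultrametric inequality `|H_n|_p ≥ p^k`, which forces `p^k ∣ v_n`.
-/

open Finset

theorem Nat.filter_Icc_one_dvd_eq_image {m : ℕ} (hm : 0 < m) (n : ℕ) :
    {i ∈ Icc 1 n | m ∣ i} = (Icc 1 (n / m)).image (m * ·) := by
  ext i
  simp only [mem_filter, mem_Icc, mem_image]
  constructor
  · rintro ⟨⟨h1, hn⟩, j, rfl⟩
    exact ⟨j, ⟨Nat.pos_of_mul_pos_left h1, (Nat.le_div_iff_mul_le hm).2 (by linarith)⟩, rfl⟩
  · rintro ⟨j, ⟨h1, hj⟩, rfl⟩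
    exact ⟨⟨Nat.mul_pos hm h1, by rw [Nat.le_div_iff_mul_le hm] at hj; linarith⟩, j, rfl⟩

theorem harmonic_eq_inv_mul_harmonic_div_add {m : ℕ} (hm : 0 < m) (n : ℕ) :
    harmonic n = (m : ℚ)⁻¹ * harmonic (n / m) + ∑ i ∈ Icc 1 n with ¬ m ∣ i, (i : ℚ)⁻¹ := by
  rw [harmonic_eq_sum_Icc, ← sum_filter_add_sum_filter_not (Icc 1 n) (m ∣ ·),
    Nat.filter_Icc_one_dvd_eq_image hm,
    sum_image (fun _ _ _ _ h => Nat.eq_of_mul_eq_mul_left hm h), harmonic_eq_sum_Icc, mul_sum]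
  simp only [Nat.cast_mul, mul_inv]

namespace padicNorm

variable {p : ℕ} [hp : Fact p.Prime]

theorem eq_num_div_den (q : ℚ) : padicNorm p q = padicNorm p q.num / padicNorm p q.den := by
  conv_lhs => rw [← Rat.num_div_den q]
  exact padicNorm.div _ _

theorem den_pos (q : ℚ) : 0 < padicNorm p q.den :=
  (padicNorm.nonneg _).lt_of_ne' (padicNorm.nonzero (by exact_mod_cast q.den_nz))

theorem one_le_of_not_dvd_num {q : ℚ} (h : ¬ (p : ℤ) ∣ q.num) : 1 ≤ padicNorm p q := by
  rw [eq_num_div_den, (int_eq_one_iff _).2 h, one_le_div (den_pos q)]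
  exact_mod_cast of_nat q.den

theorem pow_dvd_den_of_pow_le {q : ℚ} {k : ℕ} (h : (p : ℚ) ^ k ≤ padicNorm p q) :
    p ^ k ∣ q.den := by
  have hnum : padicNorm p q.num ≤ 1 := padicNorm.of_int _
  have hden : padicNorm p q.den ≤ ((p : ℚ) ^ k)⁻¹ := by
    rw [eq_num_div_den] at h
    rw [le_inv_comm₀ (den_pos q) (by have := hp.out.pos; positivity)]
    calc (p : ℚ) ^ k ≤ padicNorm p q.num / padicNorm p q.den := h
      _ ≤ (padicNorm p q.den)⁻¹ := by
        rw [div_eq_mul_inv]; exact mul_le_of_le_one_left (inv_nonneg.2 (padicNorm.nonneg _)) hnum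
  rw [← zpow_natCast, ← zpow_neg] at hden
  exact_mod_cast (dvd_iff_norm_le (z := q.den)).2 (by exact_mod_cast hden)

theorem inv_natCast_lt_of_not_pow_dvd {i k : ℕ} (h : ¬ p ^ k ∣ i) :
    padicNorm p (i : ℚ)⁻¹ < (p : ℚ) ^ k := by
  have hi : (p : ℚ) ^ (-k : ℤ) < padicNorm p i := by
    rw [← not_le, ← Int.cast_natCast, ← dvd_iff_norm_le]
    exact_mod_cast h
  have := hp.out.pos
  rw [IsAbsoluteValue.abv_inv (padicNorm p),
    inv_lt_comm₀ (hi.trans' (by positivity)) (by positivity)]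
  simpa [zpow_neg] using hi

end padicNorm

theorem dvd_harmonic_den_of_not_dvd_num_general (p : ℕ) (hp : p.Prime) (k : ℕ)
    (n n₁ r : ℕ) (hr : r ≤ p ^ k - 1)
    (heq : n = p ^ k * n₁ + r) (hndvd : ¬ (p : ℤ) ∣ (harmonic n₁).num) :
    p ^ k ∣ (harmonic n).den := by
  have : Fact p.Prime := ⟨hp⟩
  have hpk : 0 < p ^ k := pow_pos hp.pos k
  have hquot : n / p ^ k = n₁ := by
    rw [heq, Nat.mul_add_div hpk, Nat.div_eq_of_lt (by omega), add_zero]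
  have hmultiples : (p : ℚ) ^ k ≤ padicNorm p (((p ^ k : ℕ) : ℚ)⁻¹ * harmonic n₁) := by
    rw [padicNorm.mul, IsAbsoluteValue.abv_inv (padicNorm p), Nat.cast_pow,
      IsAbsoluteValue.abv_pow (padicNorm p), padicNorm.padicNorm_p_of_prime, inv_pow, inv_inv]
    exact le_mul_of_one_le_right (by positivity) (padicNorm.one_le_of_not_dvd_num hndvd)
  have hrest : padicNorm p (∑ i ∈ Icc 1 n with ¬ p ^ k ∣ i, (i : ℚ)⁻¹) < (p : ℚ) ^ k :=
    padicNorm.sum_lt' (fun i hi => padicNorm.inv_natCast_lt_of_not_pow_dvd (mem_filter.1 hi).2)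
      (by exact_mod_cast hpk)
  apply padicNorm.pow_dvd_den_of_pow_le
  rw [harmonic_eq_inv_mul_harmonic_div_add hpk, hquot,
    padicNorm.add_eq_max_of_ne (hrest.trans_le hmultiples).ne']
  exact le_max_of_le_left hmultiples

/-- Let `p` be prime, `k ≥ 1`, and `n ≥ p^k` with `n = p^k * n₁ + r`, `n₁ ≥ 1`,
`0 ≤ r ≤ p^k - 1`. If `p` does not divide the numerator `u_{n₁}` of `H_{n₁}`, then `p^k`
divides the denominator `v_n` of `H_n`. -/
theorem dvd_harmonic_den_of_not_dvd_num (p : ℕ) (hp : p.Prime) (k : ℕ) (hk : 0 < k)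
    (n n₁ r : ℕ) (hn : p ^ k ≤ n) (hn₁ : 1 ≤ n₁) (hr : r ≤ p ^ k - 1)
    (heq : n = p ^ k * n₁ + r) (hndvd : ¬ (p : ℤ) ∣ (harmonic n₁).num) :
    p ^ k ∣ (harmonic n).den :=
  dvd_harmonic_den_of_not_dvd_num_general p hp k n n₁ r hr heq hndvd
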